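/- Let ρ, τ, η be non-degenerate density matrices and let t ↦ τ_t be the exponential arc connecting τ to ρ. Then the real-valued function t ↦ D(η||τ_t) is differentiable at t = 0 with derivative −Tr η(log τ − log ρ) − D(ρ||τ). -/

import Mathlib

open MeasureTheory
open scoped ComplexOrder

attribute [local instance] Matrix.frobeniusNormedAddCommGroup Matrix.frobeniusNormedSpace

variable {n : ℕ}

/-- The matrix exponential. -/
noncomputable def mexp (A : Matrix (Fin n) (Fin n) ℂ) : Matrix (Fin n) (Fin n) ℂ :=
  NormedSpace.exp A

/-- The matrix logarithm, defined by (real) functional calculus; meaningful on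
positive definite matrices. -/
noncomputable def mlog (A : Matrix (Fin n) (Fin n) ℂ) : Matrix (Fin n) (Fin n) ℂ :=
  cfc Real.log A

/-- Real powers of a matrix, defined by (real) functional calculus; meaningful on
positive definite matrices. -/
noncomputable def mpow (A : Matrix (Fin n) (Fin n) ℂ) (u : ℝ) : Matrix (Fin n) (Fin n) ℂ :=
  cfc (fun x : ℝ => x ^ u) A

/-- Umegaki's relative entropy `D(ρ‖σ) = Tr ρ (log ρ - log σ)` (a real number). -/
noncomputable def relEnt (ρ σ : Matrix (Fin n) (Fin n) ℂ) : ℝ :=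
  (Matrix.trace (ρ * (mlog ρ - mlog σ))).re

/-- The Kubo transform `[A]^K_ρ = ∫₀¹ ρ^u A ρ^(1-u) du` (entrywise Bochner integral). -/
noncomputable def kubo (ρ A : Matrix (Fin n) (Fin n) ℂ) : Matrix (Fin n) (Fin n) ℂ :=
  ∫ u in (0:ℝ)..1, mpow ρ u * A * mpow ρ (1 - u)

/-- The chart centered at `ρ`: `c_ρ(σ) = log σ - log ρ + D(ρ‖σ)·I`. -/
noncomputable def chart (ρ σ : Matrix (Fin n) (Fin n) ℂ) : Matrix (Fin n) (Fin n) ℂ :=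
  mlog σ - mlog ρ + relEnt ρ σ • (1 : Matrix (Fin n) (Fin n) ℂ)

/-- The normalization `α(t) = log Tr exp((1-t)·log ρ + t·log σ)` of the exponential arc. -/
noncomputable def alpha (ρ σ : Matrix (Fin n) (Fin n) ℂ) (t : ℝ) : ℝ :=
  Real.log (Matrix.trace (mexp ((1 - t) • mlog ρ + t • mlog σ))).re

/-- The exponential arc connecting `σ` to `ρ`:
`σ_t = exp((1-t)·log ρ + t·log σ - α(t)·I)`. -/
noncomputable def arc (ρ σ : Matrix (Fin n) (Fin n) ℂ) (t : ℝ) : Matrix (Fin n) (Fin n) ℂ :=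
  mexp ((1 - t) • mlog ρ + t • mlog σ - alpha ρ σ t • (1 : Matrix (Fin n) (Fin n) ℂ))

/-- The potential `Φ_ρ(A) = log Tr exp(log ρ + A)`. -/
noncomputable def potential (ρ A : Matrix (Fin n) (Fin n) ℂ) : ℝ :=
  Real.log (Matrix.trace (mexp (mlog ρ + A))).re

/-- The density matrix `τ_A = exp(log ρ + A) / Tr exp(log ρ + A)`. -/
noncomputable def tauOf (ρ A : Matrix (Fin n) (Fin n) ℂ) : Matrix (Fin n) (Fin n) ℂ :=
  (Matrix.trace (mexp (mlog ρ + A)))⁻¹ • mexp (mlog ρ + A)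

/-! Along the arc, `log τ_t = (1 - t) log ρ + t log τ - α(t) I`, so `D(η‖τ_t)` is the affine
function `D(η‖ρ) - t Tr η (log τ - log ρ)` plus `α(t)`. Writing `α(t) = log Tr exp(log ρ + tB)`
with `B = log τ - log ρ`, its derivative at `0` is `Tr ρB / Tr ρ = -D(ρ‖τ)`, by the first-order
formula `d/dt Tr exp(A + tB) = Tr (exp A · B)` at `t = 0`. That formula holds for any continuous
tracial functional on a Banach algebra: differentiating the exponential series termwise, cyclicity
turns the derivative of `Tr (A + tB)^k` into `k Tr ((A + tB)^(k-1) B)`. -/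

open NormedSpace
open scoped Nat

lemma norm_pow_mul_le {R : Type*} [SeminormedRing R] (x y : R) (k : ℕ) :
    ‖x ^ k * y‖ ≤ ‖x‖ ^ k * ‖y‖ := by
  induction k with
  | zero => simp
  | succ k ih =>
    calc ‖x ^ (k + 1) * y‖ = ‖x * (x ^ k * y)‖ := by rw [pow_succ', mul_assoc]
      _ ≤ ‖x‖ * (‖x‖ ^ k * ‖y‖) := (norm_mul_le _ _).trans (by gcongr)
      _ = ‖x‖ ^ (k + 1) * ‖y‖ := by ring

section Tracial

variable {𝔸 F : Type*} [NormedRing 𝔸] [NormedAlgebra ℝ 𝔸] [NormedAddCommGroup F]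
  [NormedSpace ℝ F] (τ : 𝔸 →L[ℝ] F)

lemma hasSum_apply_exp_mul [CompleteSpace 𝔸] (x y : 𝔸) :
    HasSum (fun k => (k ! : ℝ)⁻¹ • τ (x ^ k * y)) (τ (exp x * y)) := by
  simpa only [smul_mul_assoc, map_smul] using
    ((exp_series_hasSum_exp' (𝕂 := ℝ) x).mul_right y).mapL τ

lemma hasDerivAt_tracial_pow_add_smul (hτ : ∀ x y, τ (x * y) = τ (y * x)) (a b : 𝔸) (k : ℕ)
    (t : ℝ) :
    HasDerivAt (fun s : ℝ => τ ((a + s • b) ^ k)) (k • τ ((a + t • b) ^ (k - 1) * b)) t := by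
  have hX := ((hasDerivAt_id t).smul_const b).const_add a
  rw [one_smul] at hX
  refine (τ.hasFDerivAt.comp_hasDerivAt t (hX.fun_pow' k)).congr_deriv ?_
  rw [map_sum, Finset.sum_congr rfl fun i hi => ?_, Finset.sum_const, Finset.card_range]
  rw [hτ, ← mul_assoc, ← pow_add, Nat.pred_eq_sub_one,
    Nat.add_sub_of_le (Nat.le_sub_one_of_lt (Finset.mem_range.mp hi))]
  rfl

theorem hasDerivAt_tracial_exp_add_smul [CompleteSpace 𝔸] [CompleteSpace F]
    (hτ : ∀ x y, τ (x * y) = τ (y * x)) (a b : 𝔸) :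
    HasDerivAt (fun t : ℝ => τ (exp (a + t • b))) (τ (exp a * b)) 0 := by
  let f' : ℕ → ℝ → F := fun k t => (k ! : ℝ)⁻¹ • (k • τ ((a + t • b) ^ (k - 1) * b))
  let u : ℕ → ℝ := fun k => ‖τ‖ * ‖b‖ * ((‖a‖ + ‖b‖) ^ (k - 1) / (k - 1)!)
  have hu : Summable u := by
    rw [← summable_nat_add_iff 1]
    simpa [u] using (Real.summable_pow_div_factorial (‖a‖ + ‖b‖)).mul_left (‖τ‖ * ‖b‖)
  have hf'_succ : ∀ k t, f' (k + 1) t = (k ! : ℝ)⁻¹ • τ ((a + t • b) ^ k * b) := by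
    intro k t
    simp only [f', Nat.add_sub_cancel, smul_smul, ← Nat.cast_smul_eq_nsmul ℝ]
    congr 1
    rw [Nat.factorial_succ]
    push_cast
    field_simp
  have hf'_le : ∀ k, ∀ t ∈ Metric.ball (0 : ℝ) 1, ‖f' k t‖ ≤ u k := by
    rintro (_ | k) t ht
    · simp only [f', u, zero_smul, smul_zero, norm_zero]
      positivity
    · have hX : ‖a + t • b‖ ≤ ‖a‖ + ‖b‖ := by
        refine (norm_add_le _ _).trans (add_le_add_right ?_ _)
        rw [norm_smul]
        exact mul_le_of_le_one_left (norm_nonneg _) (mem_ball_zero_iff.mp ht).le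
      rw [hf'_succ, norm_smul, norm_inv, RCLike.norm_natCast]
      simp only [u, Nat.add_sub_cancel]
      calc (k ! : ℝ)⁻¹ * ‖τ ((a + t • b) ^ k * b)‖
          ≤ (k ! : ℝ)⁻¹ * (‖τ‖ * (‖a + t • b‖ ^ k * ‖b‖)) := by
            gcongr
            exact (τ.le_opNorm _).trans (by gcongr; exact norm_pow_mul_le _ _ _)
        _ ≤ (k ! : ℝ)⁻¹ * (‖τ‖ * ((‖a‖ + ‖b‖) ^ k * ‖b‖)) := by gcongr
        _ = _ := by ring
  have hsum : ∀ t : ℝ,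
      HasSum (fun k => (k ! : ℝ)⁻¹ • τ ((a + t • b) ^ k)) (τ (exp (a + t • b))) :=
    fun t => by simpa using hasSum_apply_exp_mul τ (a + t • b) 1
  have hsum' : HasSum (fun k => f' k 0) (τ (exp a * b)) := by
    rw [← hasSum_nat_add_iff' 1]
    simpa [hf'_succ, f'] using hasSum_apply_exp_mul τ a b
  have h := hasDerivAt_tsum_of_isPreconnected hu Metric.isOpen_ball
    (convex_ball (0 : ℝ) 1).isPreconnected
    (fun k t _ => (hasDerivAt_tracial_pow_add_smul τ hτ a b k t).const_smul (k ! : ℝ)⁻¹) hf'_le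
    (Metric.mem_ball_self one_pos) (hsum 0).summable (Metric.mem_ball_self one_pos)
  rw [hsum'.tsum_eq] at h
  exact h.congr_of_eventuallyEq (.of_forall fun t => (hsum t).tsum_eq.symm)

end Tracial

section MatrixExpLog

-- The operator norm makes `Matrix (Fin n) (Fin n) ℂ` a C⋆-algebra, so that Mathlib's
-- functional-calculus facts about `CFC.log` and `exp` apply to `mlog` and `mexp`.
open scoped MatrixOrder Matrix.Norms.L2Operator

lemma mlog_mexp {H : Matrix (Fin n) (Fin n) ℂ} (hH : IsSelfAdjoint H) : mlog (mexp H) = H :=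
  CFC.log_exp H hH

lemma mexp_mlog {ρ : Matrix (Fin n) (Fin n) ℂ} (hρ : ρ.PosDef) : mexp (mlog ρ) = ρ :=
  CFC.exp_log ρ hρ.isStrictlyPositive

lemma hasDerivAt_re_trace_mexp_add_smul (A B : Matrix (Fin n) (Fin n) ℂ) :
    HasDerivAt (fun t : ℝ => (mexp (A + t • B)).trace.re) (mexp A * B).trace.re 0 := by
  exact hasDerivAt_tracial_exp_add_smul (𝔸 := Matrix (Fin n) (Fin n) ℂ)
    (Complex.reCLM.comp ((Matrix.traceLinearMap _ ℂ ℂ).restrictScalars ℝ).toContinuousLinearMap)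
    (fun x y => by simp [Matrix.trace_mul_comm x y]) A B

end MatrixExpLog

lemma mlog_arc (ρ σ : Matrix (Fin n) (Fin n) ℂ) (t : ℝ) :
    mlog (arc ρ σ t) = (1 - t) • mlog ρ + t • mlog σ - alpha ρ σ t • 1 :=
  mlog_mexp ((((IsSelfAdjoint.all _).smul (cfc_predicate _ _)).add
    ((IsSelfAdjoint.all _).smul (cfc_predicate _ _))).sub
    ((IsSelfAdjoint.all _).smul (IsSelfAdjoint.one _)))

lemma relEnt_arc {η : Matrix (Fin n) (Fin n) ℂ} (hη1 : η.trace = 1)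
    (ρ σ : Matrix (Fin n) (Fin n) ℂ) (t : ℝ) :
    relEnt η (arc ρ σ t)
      = relEnt η ρ - t * (η * (mlog σ - mlog ρ)).trace.re + alpha ρ σ t := by
  rw [relEnt, relEnt, mlog_arc]
  simp [mul_sub, mul_add, Matrix.trace_sub, Matrix.trace_add, Matrix.trace_smul, hη1]
  ring

lemma hasDerivAt_alpha {ρ : Matrix (Fin n) (Fin n) ℂ} (hρ : ρ.PosDef) (hρ1 : ρ.trace = 1)
    (σ : Matrix (Fin n) (Fin n) ℂ) : HasDerivAt (alpha ρ σ) (-relEnt ρ σ) 0 := by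
  have hsplit : ∀ t : ℝ, (1 - t) • mlog ρ + t • mlog σ = mlog ρ + t • (mlog σ - mlog ρ) := by
    intro t
    rw [smul_sub, sub_smul, one_smul]
    abel
  have h := (hasDerivAt_re_trace_mexp_add_smul (mlog ρ) (mlog σ - mlog ρ)).log
    (by simp [mexp_mlog hρ, hρ1])
  convert h using 1
  · funext t
    rw [alpha, hsplit]
  · simp [mexp_mlog hρ, hρ1, relEnt, mul_sub, Matrix.trace_sub]

theorem stmt10_general (n : ℕ) (ρ τ η : Matrix (Fin n) (Fin n) ℂ)
    (hρ : ρ.PosDef) (hρ1 : ρ.trace = 1) (hη1 : η.trace = 1) :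
    HasDerivAt (fun t : ℝ => relEnt η (arc ρ τ t))
      (-(Matrix.trace (η * (mlog τ - mlog ρ))).re - relEnt ρ τ) 0 := by
  simp_rw [relEnt_arc hη1]
  have h := (((hasDerivAt_id (0 : ℝ)).mul_const ((η * (mlog τ - mlog ρ)).trace.re)).const_sub
    (relEnt η ρ)).add (hasDerivAt_alpha hρ hρ1 τ)
  exact h.congr_deriv (by ring)

/-- along the exponential arc `τ_t` connecting `τ` to `ρ`, the function
`t ↦ D(η‖τ_t)` is differentiable at `t = 0` with derivative
`-Tr η(log τ - log ρ) - D(ρ‖τ)`. -/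
theorem stmt10 (n : ℕ) (hn : 1 ≤ n) (ρ τ η : Matrix (Fin n) (Fin n) ℂ)
    (hρ : ρ.PosDef) (hρ1 : ρ.trace = 1) (hτ : τ.PosDef) (hτ1 : τ.trace = 1)
    (hη : η.PosDef) (hη1 : η.trace = 1) :
    HasDerivAt (fun t : ℝ => relEnt η (arc ρ τ t))
      (-(Matrix.trace (η * (mlog τ - mlog ρ))).re - relEnt ρ τ) 0 :=
  stmt10_general n ρ τ η hρ hρ1 hη1
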